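/- arXiv:2105.02583 — 8 statements merged into one kernel-verified Lean document; each statement's English description precedes it below -/
import Mathlib

section
/- Let X be a uniformly convex Banach space. Then the pair (X, 𝕂) has the property L_{o,o} for linear functionals: for every ε > 0 and every x* ∈ X* with ‖x*‖ = 1, there exists η > 0 such that whenever x ∈ S_X satisfies ‖x*(x)‖ > 1 - η, there exists x₀ ∈ S_X with ‖x*(x₀)‖ = 1 and ‖x₀ - x‖ < ε. -/
/-!
Uniform convexity forces near-maximizers of a norm-one functional to cluster: if `re f x` and
`re f y` are both close to `1` on the unit ball, then `‖x + y‖ ≥ re f (x + y)` is close to `2`,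
so `x` and `y` are close. Hence a maximizing sequence of `f` is Cauchy and its limit `z` attains
the norm. Given `x` with `‖f x‖` close to `1`, rotate it by a unimodular scalar `u` so that
`f (u • x) = ‖f x‖`; then `u • x` is close to `z`, and `x₀ = u⁻¹ • z` is the required point.
-/

open Filter Topology RCLike

section

variable {𝕜 : Type*} [RCLike 𝕜] {X : Type*} [NormedAddCommGroup X] [NormedSpace 𝕜 X]

lemma exists_norm_eq_one_mul_eq_norm (a : 𝕜) : ∃ u : 𝕜, ‖u‖ = 1 ∧ u * a = ‖a‖ := by
  rcases eq_or_ne a 0 with rfl | ha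
  · exact ⟨1, norm_one, by simp⟩
  · refine ⟨(‖a‖ : 𝕜) / a, ?_, div_mul_cancel₀ _ ha⟩
    rw [norm_div, norm_ofReal, abs_norm, div_self (norm_ne_zero_iff.2 ha)]

lemma re_apply_le_norm {f : X →L[𝕜] 𝕜} (hf : ‖f‖ ≤ 1) (x : X) : re (f x) ≤ ‖x‖ :=
  calc re (f x) ≤ ‖f x‖ := re_le_norm _
    _ ≤ ‖f‖ * ‖x‖ := f.le_opNorm x
    _ ≤ ‖x‖ := mul_le_of_le_one_left (norm_nonneg x) hf

lemma exists_forall_norm_sub_lt_of_re_apply_gt [UniformConvexSpace X] {ε : ℝ} (hε : 0 < ε) :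
    ∃ δ > 0, ∀ f : X →L[𝕜] 𝕜, ‖f‖ ≤ 1 → ∀ x y : X, ‖x‖ ≤ 1 → ‖y‖ ≤ 1 →
      1 - δ < re (f x) → 1 - δ < re (f y) → ‖x - y‖ < ε := by
  let _ : NormedSpace ℝ X := NormedSpace.restrictScalars ℝ 𝕜 X
  obtain ⟨δ, hδ, hconv⟩ := exists_forall_closed_ball_dist_add_le_two_sub X hε
  refine ⟨δ / 2, half_pos hδ, fun f hf x y hx hy hfx hfy => ?_⟩
  by_contra! hxy
  have hsum : re (f (x + y)) ≤ ‖x + y‖ := re_apply_le_norm hf _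
  rw [map_add, map_add] at hsum
  linarith [hconv hx hy hxy]

lemma exists_norm_eq_one_re_apply_eq_one [UniformConvexSpace X] [CompleteSpace X]
    {f : X →L[𝕜] 𝕜} (hf : ‖f‖ = 1) : ∃ z : X, ‖z‖ = 1 ∧ re (f z) = 1 := by
  have hmax : ∀ n : ℕ, ∃ y : X, ‖y‖ ≤ 1 ∧ 1 - 1 / ((n : ℝ) + 1) < re (f y) := by
    intro n
    have hlt : 1 - 1 / ((n : ℝ) + 1) < ‖f‖ := by
      rw [hf]; linarith [Nat.one_div_pos_of_nat (α := ℝ) (n := n)]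
    obtain ⟨x, hx, hfx⟩ := f.exists_lt_apply_of_lt_opNorm hlt
    obtain ⟨u, hu, hux⟩ := exists_norm_eq_one_mul_eq_norm (f x)
    refine ⟨u • x, by rw [norm_smul, hu, one_mul]; exact hx.le, ?_⟩
    rwa [map_smul, smul_eq_mul, hux, ofReal_re]
  choose y hy_le hy_gt using hmax
  have hre : Tendsto (fun n => re (f (y n))) atTop (𝓝 1) := by
    refine tendsto_of_tendsto_of_tendsto_of_le_of_le ?_ tendsto_const_nhds (fun n => (hy_gt n).le)
      (fun n => (re_apply_le_norm hf.le _).trans (hy_le n))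
    simpa using tendsto_one_div_add_atTop_nhds_zero_nat.const_sub (1 : ℝ)
  have hcauchy : CauchySeq y := by
    refine Metric.cauchySeq_iff'.2 fun ε hε => ?_
    obtain ⟨δ, hδ, hclose⟩ := exists_forall_norm_sub_lt_of_re_apply_gt (𝕜 := 𝕜) (X := X) hε
    obtain ⟨N, hN⟩ := eventually_atTop.1 (hre.eventually (Ioi_mem_nhds (sub_lt_self 1 hδ)))
    exact ⟨N, fun n hn => by
      rw [dist_eq_norm]
      exact hclose f hf.le _ _ (hy_le n) (hy_le N) (hN n hn) (hN N le_rfl)⟩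
  obtain ⟨z, hz⟩ := cauchySeq_tendsto_of_complete hcauchy
  have hz_le : ‖z‖ ≤ 1 := le_of_tendsto hz.norm (Eventually.of_forall hy_le)
  have hfz : re (f z) = 1 :=
    tendsto_nhds_unique ((continuous_re.comp f.continuous).tendsto z |>.comp hz) hre
  exact ⟨z, le_antisymm hz_le (hfz ▸ re_apply_le_norm hf.le z), hfz⟩

end

/-- If `X` is a uniformly convex Banach space over `𝕜 = ℝ` or `ℂ`, then
the pair `(X, 𝕜)` has the property `L_{o,o}` for linear functionals. -/
theorem stmt0 {𝕜 : Type*} [RCLike 𝕜] {X : Type*} [NormedAddCommGroup X]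
    [NormedSpace 𝕜 X] [UniformConvexSpace X] [CompleteSpace X] :
    ∀ ε > (0 : ℝ), ∀ f : X →L[𝕜] 𝕜, ‖f‖ = 1 →
      ∃ η > (0 : ℝ), ∀ x : X, ‖x‖ = 1 → 1 - η < ‖f x‖ →
        ∃ x₀ : X, ‖x₀‖ = 1 ∧ ‖f x₀‖ = 1 ∧ ‖x₀ - x‖ < ε := by
  intro ε hε f hf
  obtain ⟨δ, hδ, hclose⟩ := exists_forall_norm_sub_lt_of_re_apply_gt (𝕜 := 𝕜) (X := X) hε
  obtain ⟨z, hz, hfz⟩ := exists_norm_eq_one_re_apply_eq_one hf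
  have hfz_norm : ‖f z‖ = 1 :=
    le_antisymm (by simpa [hf, hz] using f.le_opNorm z) (hfz ▸ re_le_norm (f z))
  refine ⟨δ, hδ, fun x hx hfx => ?_⟩
  obtain ⟨u, hu, hux⟩ := exists_norm_eq_one_mul_eq_norm (f x)
  have hfux : re (f (u • x)) = ‖f x‖ := by rw [map_smul, smul_eq_mul, hux, ofReal_re]
  have hzux : ‖z - u • x‖ < ε := hclose f hf.le z (u • x) hz.le
    (by rw [norm_smul, hu, hx, one_mul]) (by linarith) (by rwa [hfux])
  have hu0 : u ≠ 0 := norm_ne_zero_iff.1 (hu ▸ one_ne_zero)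
  refine ⟨u⁻¹ • z, ?_, ?_, ?_⟩
  · rw [norm_smul, norm_inv, hu, inv_one, one_mul, hz]
  · rw [map_smul, smul_eq_mul, norm_mul, norm_inv, hu, inv_one, one_mul, hfz_norm]
  · rwa [← inv_smul_smul₀ hu0 x, ← smul_sub, norm_smul, norm_inv, hu, inv_one, one_mul]
end

section
/- Suppose the pair (X, Y) has the property L_{o,o} for compact operators and Y ≠ {0}. Then the pair (X, 𝕂) has the property L_{o,o} for linear functionals, with the same modulus η: given a norm-one functional x* ∈ X* and ε > 0, the function η(ε, T) for the rank-one compact operator T(x) = x*(x)·y₀ (y₀ ∈ S_Y fixed) works for x*. -/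
/-- If `(X, Y)` has the `L_{o,o}` for compact operators (witnessed by a
modulus function `η`) and `Y ≠ {0}`, then `(X, 𝕜)` has the `L_{o,o}` for linear
functionals with the same modulus: for a norm-one functional `f` and `ε > 0`, the
value `η ε T` for the rank-one compact operator `T = f.smulRight y₀` (with `y₀ ∈ S_Y`
fixed) works for `f`. -/
theorem stmt2 {𝕜 : Type*} [RCLike 𝕜] {X Y : Type*}
    [NormedAddCommGroup X] [NormedSpace 𝕜 X] [CompleteSpace X]
    [NormedAddCommGroup Y] [NormedSpace 𝕜 Y] [CompleteSpace Y]
    (y₀ : Y) (hy₀ : ‖y₀‖ = 1)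
    (η : ℝ → (X →L[𝕜] Y) → ℝ)
    (hη : ∀ ε > (0 : ℝ), ∀ T : X →L[𝕜] Y, IsCompactOperator T → ‖T‖ = 1 →
      0 < η ε T ∧ ∀ x : X, ‖x‖ = 1 → 1 - η ε T < ‖T x‖ →
        ∃ x₀ : X, ‖x₀‖ = 1 ∧ ‖T x₀‖ = 1 ∧ ‖x₀ - x‖ < ε)
    (f : X →L[𝕜] 𝕜) (hf : ‖f‖ = 1) (ε : ℝ) (hε : 0 < ε) :
    0 < η ε (f.smulRight y₀) ∧
      ∀ x : X, ‖x‖ = 1 → 1 - η ε (f.smulRight y₀) < ‖f x‖ →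
        ∃ x₀ : X, ‖x₀‖ = 1 ∧ ‖f x₀‖ = 1 ∧ ‖x₀ - x‖ < ε := by
  set T := f.smulRight y₀ with hT
  have hTx : ∀ x : X, ‖T x‖ = ‖f x‖ := by
    intro x
    simp [hT, norm_smul, hy₀]
  have hTnorm : ‖T‖ = 1 := by
    rw [hT, ContinuousLinearMap.norm_smulRight_apply, hf, hy₀, one_mul]
  have hTc : IsCompactOperator T := by
    rw [isCompactOperator_iff_exists_mem_nhds_image_subset_compact]
    refine ⟨Metric.closedBall 0 1, Metric.closedBall_mem_nhds 0 one_pos,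
      (fun c : 𝕜 => c • y₀) '' Metric.closedBall (0 : 𝕜) 1, ?_, ?_⟩
    · exact ((isCompact_closedBall (0 : 𝕜) 1).image (by continuity))
    · rintro _ ⟨x, hx, rfl⟩
      refine ⟨f x, ?_, rfl⟩
      simp only [Metric.mem_closedBall, dist_zero_right] at hx ⊢
      calc ‖f x‖ ≤ ‖f‖ * ‖x‖ := f.le_opNorm x
      _ ≤ 1 := by rw [hf, one_mul]; exact hx
  obtain ⟨h1, h2⟩ := hη ε hε T hTc hTnorm
  refine ⟨h1, fun x hx hfx => ?_⟩
  obtain ⟨x₀, hx₀, hTx₀, hd⟩ := h2 x hx (by rw [hTx]; exact hfx)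
  exact ⟨x₀, hx₀, by rw [← hTx]; exact hTx₀, hd⟩
end

section
/- Let X be a reflexive Banach space such that the pair (X, 𝕂) has the property L_{o,o} for linear functionals. Then for every Banach space Y, the pair (X, Y) has the property L_{o,o} for compact operators: for every norm-one compact operator T : X → Y and every ε > 0 there exists η > 0 such that any x ∈ S_X with ‖T(x)‖ > 1 - η lies within distance ε of some x₀ ∈ S_X with ‖T(x₀)‖ = 1. -/
/-!
Argue by contradiction along a sequence of unit vectors `xₙ` with `‖T xₙ‖ → 1`. Compactness of `T`
gives a subsequence with `T xₙ → y`, `‖y‖ = 1`; composing `T` with a norming functional `f` of `y`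
yields a norm-one functional `g = f ∘ T` with `|g xₙ| → 1` along the subsequence. The `L_{o,o}` of
`X` for `g` moves `xₙ` by less than `ε` to a unit vector `x₀` with `|g x₀| = 1`, and then
`1 = |f (T x₀)| ≤ ‖T x₀‖ ≤ 1`.
-/

open Filter Topology

theorem exists_pos_forall_of_forall_seq {α : Type*} {s : Set α} {F : α → ℝ} {P : α → Prop}
    (hF : ∀ a ∈ s, F a ≤ 1)
    (h : ∀ x : ℕ → α, (∀ n, x n ∈ s) → Tendsto (fun n => F (x n)) atTop (𝓝 1) →
      ∃ n, P (x n)) :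
    ∃ η > 0, ∀ a ∈ s, 1 - η < F a → P a := by
  by_contra! hcon
  choose x hxs hxF hxP using fun n : ℕ => hcon (1 / (n + 1)) Nat.one_div_pos_of_nat
  have hlim : Tendsto (fun n : ℕ => 1 - 1 / ((n : ℝ) + 1)) atTop (𝓝 1) := by
    simpa using tendsto_one_div_add_atTop_nhds_zero_nat.const_sub (1 : ℝ)
  obtain ⟨n, hn⟩ := h x hxs <| tendsto_of_tendsto_of_tendsto_of_le_of_le hlim tendsto_const_nhds
    (fun n => (hxF n).le) (fun n => hF _ (hxs n))
  exact hxP n hn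

section CompactOperator

variable {𝕜 E F : Type*} [NormedAddCommGroup E] [NormedAddCommGroup F]

theorem IsCompactOperator.exists_subseq_tendsto [NontriviallyNormedField 𝕜] [NormedSpace 𝕜 E]
    [NormedSpace 𝕜 F] {T : E →L[𝕜] F} (hT : IsCompactOperator T) {x : ℕ → E} {r : ℝ}
    (hx : ∀ n, ‖x n‖ ≤ r) :
    ∃ y, ∃ φ : ℕ → ℕ, StrictMono φ ∧ Tendsto (fun n => T (x (φ n))) atTop (𝓝 y) := by
  obtain ⟨K, hK, hTK⟩ := hT.image_closedBall_subset_compact (𝕜₁ := 𝕜) r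
  have hmem : ∀ n, T (x n) ∈ K := fun n =>
    hTK ⟨x n, mem_closedBall_zero_iff.mpr (hx n), rfl⟩
  obtain ⟨y, -, φ, hφ, hlim⟩ := hK.tendsto_subseq hmem
  exact ⟨y, φ, hφ, hlim⟩

theorem IsCompactOperator.exists_dual_subseq_tendsto_norm_one [RCLike 𝕜] [NormedSpace 𝕜 E]
    [NormedSpace 𝕜 F] {T : E →L[𝕜] F} (hT : IsCompactOperator T) {x : ℕ → E} {r : ℝ}
    (hx : ∀ n, ‖x n‖ ≤ r) (hTx : Tendsto (fun n => ‖T (x n)‖) atTop (𝓝 1)) :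
    ∃ f : StrongDual 𝕜 F, ‖f‖ = 1 ∧
      ∃ φ : ℕ → ℕ, Tendsto (fun n => ‖f (T (x (φ n)))‖) atTop (𝓝 1) := by
  obtain ⟨y, φ, hφ, hlim⟩ := hT.exists_subseq_tendsto hx
  have hy : ‖y‖ = 1 := tendsto_nhds_unique hlim.norm (hTx.comp hφ.tendsto_atTop)
  obtain ⟨f, hf, hfy⟩ := exists_dual_vector 𝕜 y (by simp [hy])
  refine ⟨f, hf, φ, ?_⟩
  simpa [hfy, hy] using (f.continuous.tendsto y).comp hlim |>.norm

end CompactOperator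

theorem ContinuousLinearMap.opNorm_eq_one_of_tendsto_norm_apply {𝕜 E F : Type*}
    [NontriviallyNormedField 𝕜] [NormedAddCommGroup E] [NormedAddCommGroup F] [NormedSpace 𝕜 E]
    [NormedSpace 𝕜 F] {g : E →L[𝕜] F} (hg : ‖g‖ ≤ 1) {x : ℕ → E} (hx : ∀ n, ‖x n‖ ≤ 1)
    (hgx : Tendsto (fun n => ‖g (x n)‖) atTop (𝓝 1)) : ‖g‖ = 1 :=
  le_antisymm hg <| le_of_tendsto' hgx fun n => by simpa using g.le_opNorm_of_le (hx n)

theorem stmt3_general {𝕜 : Type*} [RCLike 𝕜] {X : Type*}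
    [NormedAddCommGroup X] [NormedSpace 𝕜 X]
    (hL : ∀ ε > (0 : ℝ), ∀ f : X →L[𝕜] 𝕜, ‖f‖ = 1 →
      ∃ η > (0 : ℝ), ∀ x : X, ‖x‖ = 1 → 1 - η < ‖f x‖ →
        ∃ x₀ : X, ‖x₀‖ = 1 ∧ ‖f x₀‖ = 1 ∧ ‖x₀ - x‖ < ε)
    (Y : Type*) [NormedAddCommGroup Y] [NormedSpace 𝕜 Y] :
    ∀ T : X →L[𝕜] Y, IsCompactOperator T → ‖T‖ = 1 → ∀ ε > (0 : ℝ),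
      ∃ η > (0 : ℝ), ∀ x : X, ‖x‖ = 1 → 1 - η < ‖T x‖ →
        ∃ x₀ : X, ‖x₀‖ = 1 ∧ ‖T x₀‖ = 1 ∧ ‖x₀ - x‖ < ε := by
  intro T hT hTnorm ε hε
  have hTle : ∀ x : X, ‖x‖ = 1 → ‖T x‖ ≤ 1 := fun x hx =>
    T.le_of_opNorm_le_of_le hTnorm.le hx.le |>.trans_eq (one_mul 1)
  refine exists_pos_forall_of_forall_seq (s := {x | ‖x‖ = 1}) (F := fun x => ‖T x‖)
    (P := fun x => ∃ x₀ : X, ‖x₀‖ = 1 ∧ ‖T x₀‖ = 1 ∧ ‖x₀ - x‖ < ε) hTle fun x hx hTx => ?_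
  obtain ⟨f, hf, φ, hfTx⟩ := hT.exists_dual_subseq_tendsto_norm_one (fun n => (hx n).le) hTx
  have hg : ‖f.comp T‖ = 1 :=
    (f.comp T).opNorm_eq_one_of_tendsto_norm_apply
      ((f.opNorm_comp_le T).trans_eq (by rw [hf, hTnorm, one_mul])) (fun n => (hx _).le) hfTx
  obtain ⟨η, hη, hLg⟩ := hL ε hε (f.comp T) hg
  obtain ⟨n, hn⟩ := (hfTx.eventually_const_lt (sub_lt_self 1 hη)).exists
  obtain ⟨x₀, hx₀, hgx₀, hdist⟩ := hLg _ (hx _) hn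
  refine ⟨φ n, x₀, hx₀, le_antisymm (hTle x₀ hx₀) ?_, hdist⟩
  calc 1 = ‖f (T x₀)‖ := hgx₀.symm
    _ ≤ ‖T x₀‖ := by simpa [hf] using f.le_opNorm (T x₀)

/-- If `X` is a reflexive Banach space such that `(X, 𝕜)` has the
`L_{o,o}` for linear functionals, then for every Banach space `Y` the pair `(X, Y)`
has the `L_{o,o}` for compact operators. -/
theorem stmt3 {𝕜 : Type*} [RCLike 𝕜] {X : Type*}
    [NormedAddCommGroup X] [NormedSpace 𝕜 X] [CompleteSpace X]
    (hrefl : Function.Surjective (NormedSpace.inclusionInDoubleDual 𝕜 X))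
    (hL : ∀ ε > (0 : ℝ), ∀ f : X →L[𝕜] 𝕜, ‖f‖ = 1 →
      ∃ η > (0 : ℝ), ∀ x : X, ‖x‖ = 1 → 1 - η < ‖f x‖ →
        ∃ x₀ : X, ‖x₀‖ = 1 ∧ ‖f x₀‖ = 1 ∧ ‖x₀ - x‖ < ε)
    (Y : Type*) [NormedAddCommGroup Y] [NormedSpace 𝕜 Y] [CompleteSpace Y] :
    ∀ T : X →L[𝕜] Y, IsCompactOperator T → ‖T‖ = 1 → ∀ ε > (0 : ℝ),
      ∃ η > (0 : ℝ), ∀ x : X, ‖x‖ = 1 → 1 - η < ‖T x‖ →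
        ∃ x₀ : X, ‖x₀‖ = 1 ∧ ‖T x₀‖ = 1 ∧ ‖x₀ - x‖ < ε :=
  stmt3_general hL Y
end

section
/- If the pair (X × Y; 𝕂) has the property L_{o,o} for bilinear forms, then the pair (X, Y*) has the property L_{o,o} for bounded linear operators: for every norm-one T : X → Y* and ε > 0 there exists η > 0 such that any x ∈ S_X with ‖T(x)‖ > 1 - η is within ε of some x₀ ∈ S_X with ‖T(x₀)‖ = 1. -/
/-- If `(X × Y; 𝕜)` has the `L_{o,o}` for bilinear forms, then
`(X, Y*)` has the `L_{o,o}` for bounded linear operators (via the identification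
of `T : X → Y*` with the bilinear form `B_T (x, y) = T x y`). -/
theorem stmt12 {𝕜 : Type*} [RCLike 𝕜] {X Y : Type*}
    [NormedAddCommGroup X] [NormedSpace 𝕜 X] [CompleteSpace X]
    [NormedAddCommGroup Y] [NormedSpace 𝕜 Y] [CompleteSpace Y]
    (hL : ∀ ε > (0 : ℝ), ∀ B : X →L[𝕜] Y →L[𝕜] 𝕜, ‖B‖ = 1 →
      ∃ η > (0 : ℝ), ∀ (x : X) (y : Y), ‖x‖ = 1 → ‖y‖ = 1 → 1 - η < ‖B x y‖ →
        ∃ (x₀ : X) (y₀ : Y), ‖x₀‖ = 1 ∧ ‖y₀‖ = 1 ∧ ‖B x₀ y₀‖ = 1 ∧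
          ‖x₀ - x‖ < ε ∧ ‖y₀ - y‖ < ε) :
    ∀ T : X →L[𝕜] Y →L[𝕜] 𝕜, ‖T‖ = 1 → ∀ ε > (0 : ℝ),
      ∃ η > (0 : ℝ), ∀ x : X, ‖x‖ = 1 → 1 - η < ‖T x‖ →
        ∃ x₀ : X, ‖x₀‖ = 1 ∧ ‖T x₀‖ = 1 ∧ ‖x₀ - x‖ < ε := by
  intro T hT ε hε
  obtain ⟨η, hη, hmain⟩ := hL ε hε T hT
  refine ⟨min η (1/2), lt_min hη (by norm_num), ?_⟩
  intro x hx hTx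
  have h2 : (0:ℝ) < 1 - min η (1/2) := by
    have := min_le_right η (1/2); linarith
  -- find a unit vector y with 1 - min η (1/2) < ‖T x y‖
  obtain ⟨y, hy1, hy2⟩ := (T x).exists_lt_apply_of_lt_opNorm hTx
  have hTy0 : T x y ≠ 0 := by
    intro h
    rw [h, norm_zero] at hy2; linarith
  have hy0 : y ≠ 0 := by
    intro h; apply hTy0; rw [h, map_zero]
  have hyn : (0:ℝ) < ‖y‖ := norm_pos_iff.mpr hy0
  set y' : Y := ((‖y‖ : ℝ) : 𝕜)⁻¹ • y with hy'
  have hy'norm : ‖y'‖ = 1 := by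
    rw [hy', norm_smul, norm_inv, RCLike.norm_ofReal, abs_of_pos hyn,
      inv_mul_cancel₀ hyn.ne']
  have hkey : 1 - η < ‖T x y'‖ := by
    have heq : ‖T x y'‖ = (‖y‖)⁻¹ * ‖T x y‖ := by
      rw [hy', map_smul, norm_smul, norm_inv, RCLike.norm_ofReal, abs_of_pos hyn]
    have hge : ‖T x y‖ ≤ ‖T x y'‖ := by
      rw [heq]
      have h1 : (1:ℝ) ≤ (‖y‖)⁻¹ := (one_le_inv_iff₀.mpr ⟨hyn, hy1.le⟩)
      nlinarith [norm_nonneg (T x y)]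
    have := min_le_left η (1/2)
    linarith
  obtain ⟨x₀, y₀, hx₀, hy₀, hB, hxd, hyd⟩ := hmain x y' hx hy'norm hkey
  refine ⟨x₀, hx₀, le_antisymm ?_ ?_, hxd⟩
  · calc ‖T x₀‖ ≤ ‖T‖ * ‖x₀‖ := T.le_opNorm x₀
      _ = 1 := by rw [hT, hx₀, one_mul]
  · calc (1:ℝ) = ‖T x₀ y₀‖ := hB.symm
      _ ≤ ‖T x₀‖ * ‖y₀‖ := (T x₀).le_opNorm y₀
      _ = ‖T x₀‖ := by rw [hy₀, mul_one]
end

section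
/- Let X, Y be Banach spaces and suppose (X × Y; 𝕂) has the L_{o,o} for bilinear forms with Y ≠ {0}. Then (X, 𝕂) has the L_{o,o} for linear functionals, that is, every norm-one x* ∈ X* satisfies: for ε > 0 there is η > 0 such that any x ∈ S_X with |x*(x)| > 1 - η is within ε of some x₁ ∈ S_X with |x*(x₁)| = 1. -/
set_option maxHeartbeats 1000000 in


/-- If `(X × Y; 𝕜)` has the `L_{o,o}` for bilinear forms and `Y ≠ {0}`
(witnessed by `y₀ ∈ S_Y` and `y* ∈ S_{Y*}` with `y*(y₀) = 1`), then `(X, 𝕜)` has the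
`L_{o,o}` for linear functionals. -/
theorem stmt13 {𝕜 : Type*} [RCLike 𝕜] {X Y : Type*}
    [NormedAddCommGroup X] [NormedSpace 𝕜 X] [CompleteSpace X]
    [NormedAddCommGroup Y] [NormedSpace 𝕜 Y] [CompleteSpace Y]
    (y₀ : Y) (hy₀ : ‖y₀‖ = 1) (ystar : Y →L[𝕜] 𝕜) (hystar : ‖ystar‖ = 1)
    (hpair : ystar y₀ = 1)
    (hL : ∀ ε > (0 : ℝ), ∀ B : X →L[𝕜] Y →L[𝕜] 𝕜, ‖B‖ = 1 →
      ∃ η > (0 : ℝ), ∀ (x : X) (y : Y), ‖x‖ = 1 → ‖y‖ = 1 → 1 - η < ‖B x y‖ →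
        ∃ (x₀' : X) (y₀' : Y), ‖x₀'‖ = 1 ∧ ‖y₀'‖ = 1 ∧ ‖B x₀' y₀'‖ = 1 ∧
          ‖x₀' - x‖ < ε ∧ ‖y₀' - y‖ < ε) :
    ∀ xstar : X →L[𝕜] 𝕜, ‖xstar‖ = 1 → ∀ ε > (0 : ℝ),
      ∃ η > (0 : ℝ), ∀ x : X, ‖x‖ = 1 → 1 - η < ‖xstar x‖ →
        ∃ x₁ : X, ‖x₁‖ = 1 ∧ ‖xstar x₁‖ = 1 ∧ ‖x₁ - x‖ < ε := by
  intro xstar hxstar ε hε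
  set B : X →L[𝕜] Y →L[𝕜] 𝕜 := xstar.smulRight ystar with hB
  have hBnorm : ‖B‖ = 1 := by
    rw [hB, ContinuousLinearMap.norm_smulRight_apply, hxstar, hystar, one_mul]
  obtain ⟨η, hη, h⟩ := hL ε hε B hBnorm
  refine ⟨η, hη, fun x hx hxη => ?_⟩
  have hy : 1 - η < ‖B x y₀‖ := by
    simpa [hB, ContinuousLinearMap.smulRight_apply, hpair] using hxη
  obtain ⟨x₁, y₁, hx₁, hy₁, hBxy, hdx, hdy⟩ := h x y₀ hx hy₀ hy
  refine ⟨x₁, hx₁, ?_, hdx⟩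
  have hBval : ‖xstar x₁‖ * ‖ystar y₁‖ = 1 := by
    simpa [hB, ContinuousLinearMap.smulRight_apply, norm_smul] using hBxy
  have h1 : ‖xstar x₁‖ ≤ 1 := by
    calc ‖xstar x₁‖ ≤ ‖xstar‖ * ‖x₁‖ := xstar.le_opNorm x₁
    _ = 1 := by rw [hxstar, hx₁, one_mul]
  have h2 : ‖ystar y₁‖ ≤ 1 := by
    calc ‖ystar y₁‖ ≤ ‖ystar‖ * ‖y₁‖ := ystar.le_opNorm y₁
    _ = 1 := by rw [hystar, hy₁, one_mul]
  have h3 : (1:ℝ) ≤ ‖xstar x₁‖ := by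
    calc (1:ℝ) = ‖xstar x₁‖ * ‖ystar y₁‖ := hBval.symm
    _ ≤ ‖xstar x₁‖ * 1 := mul_le_mul_of_nonneg_left h2 (norm_nonneg _)
    _ = ‖xstar x₁‖ := mul_one _
  linarith
end

section
/- Let X be a reflexive Banach space and suppose (X, 𝕂) has the L_{o,o} for linear functionals. Then for every Banach space Y and every compact operator T : X → Y with ‖T‖ = 1, the set NA(T) = {x ∈ S_X : ‖T(x)‖ = 1} is nonempty, and there is no sequence (xₙ) ⊆ S_X with ‖T(xₙ)‖ → 1 and dist(xₙ, NA(T)) ≥ ε₀ for some fixed ε₀ > 0. -/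
/-!
A compact operator `T` carries a norming sequence `(uₙ)` of unit vectors to a sequence with a
convergent subsequence `T u_{φ n} → y`, and `‖y‖ = ‖T‖ = 1`. A Hahn–Banach functional `g` norming
`y` turns `g ∘ T` into a norm-one functional almost attained along `u_{φ n}`; the `L_{o,o}` property
moves some `u_{φ n}` by less than `ε` to a unit vector `z` with `|g (T z)| = 1`, forcing `‖T z‖ = 1`.
Applied to an arbitrary sequence with `‖T xₙ‖ → 1`, this contradicts `dist(xₙ, NA(T)) ≥ ε₀`.
-/

open scoped Topology
open Filter Set

/-- The `L_{o,o}` property of the pair `(X, 𝕜)` for linear functionals. -/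
def HasLooForFunctionals (𝕜 X : Type*) [RCLike 𝕜] [NormedAddCommGroup X] [NormedSpace 𝕜 X] :
    Prop :=
  ∀ ε > (0 : ℝ), ∀ f : X →L[𝕜] 𝕜, ‖f‖ = 1 →
    ∃ η > (0 : ℝ), ∀ x : X, ‖x‖ = 1 → 1 - η < ‖f x‖ →
      ∃ x₀ : X, ‖x₀‖ = 1 ∧ ‖f x₀‖ = 1 ∧ ‖x₀ - x‖ < ε

section

variable {𝕜 E F : Type*} [NontriviallyNormedField 𝕜] [NormedAddCommGroup E] [NormedSpace 𝕜 E]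
  [NormedAddCommGroup F] [NormedSpace 𝕜 F]

theorem ContinuousLinearMap.le_opNorm_of_tendsto {ι : Type*} {l : Filter ι} [l.NeBot]
    (f : E →L[𝕜] F) {v : ι → E} {c : ℝ} (hv : ∀ i, ‖v i‖ ≤ 1) (hfv : Tendsto (fun i => ‖f (v i)‖) l (𝓝 c)) : c ≤ ‖f‖ :=
  le_of_tendsto' hfv fun i => f.unit_le_opNorm _ (hv i)

theorem IsCompactOperator.exists_tendsto_subseq {T : E →L[𝕜] F} (hT : IsCompactOperator T)
    {u : ℕ → E} (hu : Bornology.IsBounded (range u)) :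
    ∃ y : F, ∃ φ : ℕ → ℕ, StrictMono φ ∧ Tendsto (fun n => T (u (φ n))) atTop (𝓝 y) := by
  obtain ⟨K, hK, hTK⟩ := hT.image_subset_compact_of_bounded hu
  obtain ⟨y, -, φ, hφ, hlim⟩ := hK.tendsto_subseq fun n => hTK ⟨u n, mem_range_self n, rfl⟩
  exact ⟨y, φ, hφ, hlim⟩

end

section

variable {𝕜 X Y : Type*} [RCLike 𝕜] [NormedAddCommGroup X] [NormedSpace 𝕜 X]
  [NormedAddCommGroup Y] [NormedSpace 𝕜 Y]

theorem ContinuousLinearMap.exists_seq_norm_eq_one_tendsto_norm_apply (f : X →L[𝕜] Y)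
    (hf : f ≠ 0) :
    ∃ u : ℕ → X, (∀ n, ‖u n‖ = 1) ∧ Tendsto (fun n => ‖f (u n)‖) atTop (𝓝 ‖f‖) := by
  obtain ⟨r, -, hr, hr_lim⟩ := exists_seq_strictMono_tendsto' (nnnorm_pos.2 hf)
  choose u hu hru using fun n => f.exists_nnnorm_eq_one_lt_apply_of_lt_opNNNorm (hr n).2
  have hu' : ∀ n, ‖u n‖ = 1 := fun n => congrArg NNReal.toReal (hu n)
  refine ⟨u, hu', ?_⟩
  have hlim : Tendsto (fun n => (r n : ℝ)) atTop (𝓝 ‖f‖) := NNReal.tendsto_coe.2 hr_lim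
  exact tendsto_of_tendsto_of_tendsto_of_le_of_le hlim tendsto_const_nhds
    (fun n => (hru n).le) fun n => f.unit_le_opNorm _ (hu' n).le

theorem IsCompactOperator.exists_functional_tendsto_subseq {T : X →L[𝕜] Y}
    (hT : IsCompactOperator T) {u : ℕ → X} (hu : Bornology.IsBounded (range u)) {c : ℝ}
    (hTu : Tendsto (fun n => ‖T (u n)‖) atTop (𝓝 c)) :
    ∃ g : StrongDual 𝕜 Y, ‖g‖ ≤ 1 ∧ ∃ φ : ℕ → ℕ, StrictMono φ ∧
      Tendsto (fun n => ‖g (T (u (φ n)))‖) atTop (𝓝 c) := by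
  obtain ⟨y, φ, hφ, hlim⟩ := hT.exists_tendsto_subseq hu
  have hy : ‖y‖ = c := tendsto_nhds_unique hlim.norm (hTu.comp hφ.tendsto_atTop)
  obtain ⟨g, hg, hgy⟩ := exists_dual_vector'' 𝕜 y
  refine ⟨g, hg, φ, hφ, ?_⟩
  have hgy_norm : ‖g y‖ = c := by rw [hgy, RCLike.norm_ofReal, abs_norm, hy]
  exact hgy_norm ▸ ((g.continuous.tendsto y).comp hlim).norm

theorem HasLooForFunctionals.exists_norm_eq_one_near (hL : HasLooForFunctionals 𝕜 X)
    {f : StrongDual 𝕜 X} (hf : ‖f‖ = 1) {u : ℕ → X} (hu : ∀ n, ‖u n‖ = 1)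
    (hfu : Tendsto (fun n => ‖f (u n)‖) atTop (𝓝 1)) {ε : ℝ} (hε : 0 < ε) :
    ∃ n, ∃ x₀ : X, ‖x₀‖ = 1 ∧ ‖f x₀‖ = 1 ∧ ‖x₀ - u n‖ < ε := by
  obtain ⟨η, hη, hx₀⟩ := hL ε hε f hf
  obtain ⟨n, hn⟩ := ((tendsto_order.1 hfu).1 (1 - η) (by linarith)).exists
  exact ⟨n, hx₀ (u n) (hu n) hn⟩

theorem HasLooForFunctionals.exists_dist_lt_normAttaining (hL : HasLooForFunctionals 𝕜 X)
    {T : X →L[𝕜] Y} (hTc : IsCompactOperator T) (hT : ‖T‖ = 1) {u : ℕ → X}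
    (hu : ∀ n, ‖u n‖ = 1) (hTu : Tendsto (fun n => ‖T (u n)‖) atTop (𝓝 1)) {ε : ℝ}
    (hε : 0 < ε) : ∃ n, ∃ z ∈ {z : X | ‖z‖ = 1 ∧ ‖T z‖ = 1}, dist (u n) z < ε := by
  have hbdd : Bornology.IsBounded (range u) :=
    (Metric.isBounded_sphere (x := (0 : X)) (r := 1)).subset
      (range_subset_iff.2 fun n => mem_sphere_zero_iff_norm.2 (hu n))
  obtain ⟨g, hg, φ, -, hgTu⟩ := hTc.exists_functional_tendsto_subseq hbdd hTu
  have hgT : ‖g.comp T‖ = 1 := by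
    refine le_antisymm ?_ ((g.comp T).le_opNorm_of_tendsto (fun n => (hu (φ n)).le) hgTu)
    calc ‖g.comp T‖ ≤ ‖g‖ * ‖T‖ := g.opNorm_comp_le T
      _ ≤ 1 := by rw [hT, mul_one]; exact hg
  obtain ⟨n, z, hz, hgTz, hzu⟩ :=
    hL.exists_norm_eq_one_near hgT (fun n => hu (φ n)) hgTu hε
  have hTz : ‖T z‖ = 1 := by
    refine le_antisymm (T.unit_le_opNorm z hz.le |>.trans hT.le) ?_
    calc 1 = ‖g (T z)‖ := hgTz.symm
      _ ≤ ‖g‖ * ‖T z‖ := g.le_opNorm _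
      _ ≤ ‖T z‖ := mul_le_of_le_one_left (norm_nonneg _) hg
  exact ⟨φ n, z, ⟨hz, hTz⟩, by rwa [dist_comm, dist_eq_norm]⟩

end

theorem stmt14_general {𝕜 : Type*} [RCLike 𝕜] {X Y : Type*}
    [NormedAddCommGroup X] [NormedSpace 𝕜 X]
    [NormedAddCommGroup Y] [NormedSpace 𝕜 Y]
    (hL : ∀ ε > (0 : ℝ), ∀ f : X →L[𝕜] 𝕜, ‖f‖ = 1 →
      ∃ η > (0 : ℝ), ∀ x : X, ‖x‖ = 1 → 1 - η < ‖f x‖ →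
        ∃ x₀ : X, ‖x₀‖ = 1 ∧ ‖f x₀‖ = 1 ∧ ‖x₀ - x‖ < ε)
    (T : X →L[𝕜] Y) (hTc : IsCompactOperator T) (hT : ‖T‖ = 1) :
    ({x : X | ‖x‖ = 1 ∧ ‖T x‖ = 1}).Nonempty ∧
      ¬ ∃ (x : ℕ → X) (ε₀ : ℝ), 0 < ε₀ ∧ (∀ n, ‖x n‖ = 1) ∧
        Tendsto (fun n => ‖T (x n)‖) atTop (𝓝 1) ∧
        ∀ n, ε₀ ≤ Metric.infDist (x n) {z : X | ‖z‖ = 1 ∧ ‖T z‖ = 1} := by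
  have hLoo : HasLooForFunctionals 𝕜 X := hL
  obtain ⟨u, hu, hTu⟩ := T.exists_seq_norm_eq_one_tendsto_norm_apply (by rintro rfl; simp at hT)
  rw [hT] at hTu
  refine ⟨?_, ?_⟩
  · obtain ⟨-, z, hz, -⟩ := hLoo.exists_dist_lt_normAttaining hTc hT hu hTu one_pos
    exact ⟨z, hz⟩
  · rintro ⟨x, ε₀, hε₀, hx, hTx, hxd⟩
    obtain ⟨n, z, hz, hxz⟩ := hLoo.exists_dist_lt_normAttaining hTc hT hx hTx hε₀
    exact (hxd n).not_gt ((Metric.infDist_le_dist_of_mem hz).trans_lt hxz)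

/-- If `X` is reflexive and `(X, 𝕜)` has the `L_{o,o}` for linear
functionals, then for every Banach `Y` and compact norm-one `T : X → Y`, the set
`NA(T) = {x ∈ S_X : ‖T x‖ = 1}` is nonempty, and no sequence in `S_X` with
`‖T xₙ‖ → 1` stays at distance `≥ ε₀ > 0` from `NA(T)`. -/
theorem stmt14 {𝕜 : Type*} [RCLike 𝕜] {X Y : Type*}
    [NormedAddCommGroup X] [NormedSpace 𝕜 X] [CompleteSpace X]
    [NormedAddCommGroup Y] [NormedSpace 𝕜 Y] [CompleteSpace Y]
    (hrefl : Function.Surjective (NormedSpace.inclusionInDoubleDual 𝕜 X))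
    (hL : ∀ ε > (0 : ℝ), ∀ f : X →L[𝕜] 𝕜, ‖f‖ = 1 →
      ∃ η > (0 : ℝ), ∀ x : X, ‖x‖ = 1 → 1 - η < ‖f x‖ →
        ∃ x₀ : X, ‖x₀‖ = 1 ∧ ‖f x₀‖ = 1 ∧ ‖x₀ - x‖ < ε)
    (T : X →L[𝕜] Y) (hTc : IsCompactOperator T) (hT : ‖T‖ = 1) :
    ({x : X | ‖x‖ = 1 ∧ ‖T x‖ = 1}).Nonempty ∧
      ¬ ∃ (x : ℕ → X) (ε₀ : ℝ), 0 < ε₀ ∧ (∀ n, ‖x n‖ = 1) ∧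
        Tendsto (fun n => ‖T (x n)‖) atTop (𝓝 1) ∧
        ∀ n, ε₀ ≤ Metric.infDist (x n) {z : X | ‖z‖ = 1 ∧ ‖T z‖ = 1} :=
  stmt14_general hL T hTc hT
end

section
/- Let X, Y be real Banach spaces. If B : X × Y → ℝ is a norm-one bilinear form, xₙ ∈ S_X with xₙ ⇀ x₀, yₙ ∈ S_Y with yₙ ⇀ y₀, B(xₙ, yₙ) → 1, and the associated operator T_B : X → Y* is compact, then ‖x₀‖ = 1, ‖y₀‖ = 1 and B(x₀, y₀) = 1. -/
open scoped Topology
open Filter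

/-- For real Banach spaces, if `B` is a norm-one bilinear form with
compact associated operator `T_B : X → Y*`, `xₙ ∈ S_X` with `xₙ ⇀ x₀`, `yₙ ∈ S_Y`
with `yₙ ⇀ y₀`, and `B xₙ yₙ → 1`, then `‖x₀‖ = 1`, `‖y₀‖ = 1` and `B x₀ y₀ = 1`. -/
theorem stmt16 {X Y : Type*}
    [NormedAddCommGroup X] [NormedSpace ℝ X] [CompleteSpace X]
    [NormedAddCommGroup Y] [NormedSpace ℝ Y] [CompleteSpace Y]
    (B : X →L[ℝ] Y →L[ℝ] ℝ) (hB : ‖B‖ = 1)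
    (hBc : IsCompactOperator (fun x : X => B x))
    (x : ℕ → X) (x₀ : X) (hx : ∀ n, ‖x n‖ = 1)
    (hwx : ∀ f : X →L[ℝ] ℝ, Tendsto (fun n => f (x n)) atTop (𝓝 (f x₀)))
    (y : ℕ → Y) (y₀ : Y) (hy : ∀ n, ‖y n‖ = 1)
    (hwy : ∀ g : Y →L[ℝ] ℝ, Tendsto (fun n => g (y n)) atTop (𝓝 (g y₀)))
    (hconv : Tendsto (fun n => B (x n) (y n)) atTop (𝓝 (1 : ℝ))) :
    ‖x₀‖ = 1 ∧ ‖y₀‖ = 1 ∧ B x₀ y₀ = 1 := by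
  -- Step 1: get a compact set containing B (x n) for all n.
  obtain ⟨K, hK, hKmem⟩ := hBc
  obtain ⟨ε, hε, hball⟩ := Metric.mem_nhds_iff.mp hKmem
  set C : Set (Y →L[ℝ] ℝ) := (fun z => (2 / ε) • z) '' K with hC
  have hCcomp : IsCompact C := hK.image (continuous_const_smul _)
  have hmemC : ∀ n, B (x n) ∈ C := by
    intro n
    refine ⟨B ((ε / 2) • x n), hball ?_, ?_⟩
    · simp only [Metric.mem_ball, dist_zero_right, norm_smul, hx n, mul_one,
        Real.norm_eq_abs, abs_of_pos (half_pos hε)]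
      linarith
    · have h2 : (2 / ε) * (ε / 2) = 1 := by field_simp
      rw [map_smul]
      show (2 / ε) • ((ε/2) • B (x n)) = B (x n)
      rw [smul_smul, h2, one_smul]
  -- Step 2: strong convergence B (x n) → B x₀.
  have hstrong : Tendsto (fun n => B (x n)) atTop (𝓝 (B x₀)) := by
    apply tendsto_of_subseq_tendsto
    intro ns hns
    obtain ⟨z, hzC, ms, hms, hmt⟩ := hCcomp.tendsto_subseq (x := fun n => B (x (ns n)))
      (fun n => hmemC (ns n))
    refine ⟨ms, ?_⟩
    have hz : z = B x₀ := by
      ext v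
      have h1 : Tendsto (fun k => B (x (ns (ms k))) v) atTop (𝓝 (z v)) :=
        (ContinuousLinearMap.apply ℝ ℝ v).continuous.continuousAt.tendsto.comp hmt
      have h2 : Tendsto (fun k => B (x (ns (ms k))) v) atTop (𝓝 (B x₀ v)) :=
        (hwx (B.flip v)).comp ((hns.comp hms.tendsto_atTop))
      exact tendsto_nhds_unique h1 h2
    rwa [hz] at hmt
  -- Step 3: B (x n) (y n) → B x₀ y₀.
  have hlim : Tendsto (fun n => B (x n) (y n)) atTop (𝓝 (B x₀ y₀)) := by
    have h1 : Tendsto (fun n => B (x n) (y n) - B x₀ (y n)) atTop (𝓝 0) := by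
      rw [tendsto_iff_norm_sub_tendsto_zero] at hstrong
      have := hstrong
      rw [show (0:ℝ) = 0 from rfl] at this
      refine squeeze_zero_norm (fun n => ?_) this
      calc ‖B (x n) (y n) - B x₀ (y n)‖ = ‖(B (x n) - B x₀) (y n)‖ := by simp
        _ ≤ ‖B (x n) - B x₀‖ * ‖y n‖ := (B (x n) - B x₀).le_opNorm _
        _ = ‖B (x n) - B x₀‖ := by rw [hy n, mul_one]
    have h2 : Tendsto (fun n => B x₀ (y n)) atTop (𝓝 (B x₀ y₀)) := hwy (B x₀)
    have := h1.add h2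
    simpa using this
  have hBxy : B x₀ y₀ = 1 := tendsto_nhds_unique hlim hconv
  -- Step 4: norms.
  have hxle : ‖x₀‖ ≤ 1 := by
    by_cases h0 : x₀ = 0
    · simp [h0]
    obtain ⟨f, hf1, hfx⟩ := exists_dual_vector ℝ x₀ (norm_ne_zero_iff.mpr h0)
    have : Tendsto (fun n => (f (x n) : ℝ)) atTop (𝓝 (f x₀)) := hwx (f.restrictScalars ℝ)
    have hle : (f x₀ : ℝ) ≤ 1 := by
      refine le_of_tendsto this (Eventually.of_forall fun n => ?_)
      calc (f (x n) : ℝ) ≤ ‖f (x n)‖ := le_abs_self _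
        _ ≤ ‖f‖ * ‖x n‖ := f.le_opNorm _
        _ = 1 := by rw [hf1, hx n, one_mul]
    rw [hfx] at hle
    exact_mod_cast hle
  have hyle : ‖y₀‖ ≤ 1 := by
    by_cases h0 : y₀ = 0
    · simp [h0]
    obtain ⟨g, hg1, hgy⟩ := exists_dual_vector ℝ y₀ (norm_ne_zero_iff.mpr h0)
    have : Tendsto (fun n => (g (y n) : ℝ)) atTop (𝓝 (g y₀)) := hwy (g.restrictScalars ℝ)
    have hle : (g y₀ : ℝ) ≤ 1 := by
      refine le_of_tendsto this (Eventually.of_forall fun n => ?_)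
      calc (g (y n) : ℝ) ≤ ‖g (y n)‖ := le_abs_self _
        _ ≤ ‖g‖ * ‖y n‖ := g.le_opNorm _
        _ = 1 := by rw [hg1, hy n, one_mul]
    rw [hgy] at hle
    exact_mod_cast hle
  have hprod : 1 ≤ ‖x₀‖ * ‖y₀‖ := by
    have : B x₀ y₀ ≤ ‖B x₀ y₀‖ := le_abs_self _
    have h := (B x₀).le_opNorm y₀
    have h' := B.le_opNorm x₀
    calc (1:ℝ) = B x₀ y₀ := hBxy.symm
      _ ≤ ‖B x₀ y₀‖ := le_abs_self _
      _ ≤ ‖B x₀‖ * ‖y₀‖ := h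
      _ ≤ (‖B‖ * ‖x₀‖) * ‖y₀‖ := by
          exact mul_le_mul_of_nonneg_right h' (norm_nonneg _)
      _ = ‖x₀‖ * ‖y₀‖ := by rw [hB, one_mul]
  have hx1 : ‖x₀‖ = 1 := by
    have : 1 ≤ ‖x₀‖ := by nlinarith [norm_nonneg x₀, norm_nonneg y₀]
    linarith
  have hy1 : ‖y₀‖ = 1 := by
    have : 1 ≤ ‖y₀‖ := by nlinarith [norm_nonneg x₀, norm_nonneg y₀]
    linarith
  exact ⟨hx1, hy1, hBxy⟩
end

section
/- Suppose the pair (X, 𝕂) fails the L_{o,o} for linear functionals because some norm-one functional does not attain its norm. Then for every nonzero Banach space Y, the pair (X, Y) fails the L_{o,o} for compact operators. -/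
/-- If some norm-one functional on `X` does not attain its norm (so
`(X, 𝕜)` fails the `L_{o,o}` for linear functionals), then for every nonzero Banach
space `Y`, the pair `(X, Y)` fails the `L_{o,o}` for compact operators. -/
theorem stmt17 {𝕜 : Type*} [RCLike 𝕜] {X Y : Type*}
    [NormedAddCommGroup X] [NormedSpace 𝕜 X] [CompleteSpace X]
    [NormedAddCommGroup Y] [NormedSpace 𝕜 Y] [CompleteSpace Y]
    (hY : ∃ y : Y, y ≠ 0)
    (hfail : ∃ f : X →L[𝕜] 𝕜, ‖f‖ = 1 ∧ ∀ x : X, ‖x‖ = 1 → ‖f x‖ ≠ 1) :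
    ¬ (∀ ε > (0 : ℝ), ∀ T : X →L[𝕜] Y, IsCompactOperator T → ‖T‖ = 1 →
      ∃ η > (0 : ℝ), ∀ x : X, ‖x‖ = 1 → 1 - η < ‖T x‖ →
        ∃ x₀ : X, ‖x₀‖ = 1 ∧ ‖T x₀‖ = 1 ∧ ‖x₀ - x‖ < ε) := by
  intro H
  obtain ⟨y, hy⟩ := hY
  obtain ⟨f, hf1, hfna⟩ := hfail
  set y₀ : Y := ((‖y‖ : 𝕜))⁻¹ • y with hy₀def
  have hy₀ : ‖y₀‖ = 1 := by
    rw [hy₀def, norm_smul, norm_inv, RCLike.norm_ofReal, abs_norm,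
      inv_mul_cancel₀ (norm_ne_zero_iff.mpr hy)]
  set T : X →L[𝕜] Y := f.smulRight y₀ with hTdef
  have hT1 : ‖T‖ = 1 := by
    rw [hTdef, ContinuousLinearMap.norm_smulRight_apply, hf1, hy₀, one_mul]
  have hTapp : ∀ x, ‖T x‖ = ‖f x‖ := by
    intro x
    rw [hTdef, ContinuousLinearMap.smulRight_apply, norm_smul, hy₀, mul_one]
  -- T is compact (rank one)
  have hTc : IsCompactOperator (T : X → Y) := by
    have : (T : X → Y) = (ContinuousLinearMap.toSpanSingleton 𝕜 y₀) ∘ f := by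
      ext x
      simp [hTdef, ContinuousLinearMap.toSpanSingleton_apply]
    rw [this]
    apply IsCompactOperator.clm_comp
    refine ⟨Metric.closedBall 0 ‖f‖, isCompact_closedBall 0 ‖f‖, ?_⟩
    have : Metric.ball (0 : X) 1 ⊆ f ⁻¹' Metric.closedBall 0 ‖f‖ := by
      intro x hx
      simp only [Set.mem_preimage, Metric.mem_closedBall, dist_zero_right]
      calc ‖f x‖ ≤ ‖f‖ * ‖x‖ := f.le_opNorm x
        _ ≤ ‖f‖ * 1 := by
            apply mul_le_mul_of_nonneg_left _ (norm_nonneg f)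
            exact le_of_lt (by simpa using hx)
        _ = ‖f‖ := mul_one _
    exact Filter.mem_of_superset (Metric.ball_mem_nhds 0 one_pos) this
  obtain ⟨η, hη, hconc⟩ := H 1 one_pos T hTc hT1
  -- find x with ‖x‖ = 1 and ‖f x‖ > 1 - η
  set r : ℝ := max (1 - η) (1/2) with hrdef
  have hr1 : r < ‖f‖ := by
    rw [hf1, hrdef]
    exact max_lt (by linarith) (by norm_num)
  have hrpos : (0 : ℝ) < r := lt_of_lt_of_le (by norm_num) (le_max_right _ _)
  obtain ⟨x, hx1, hxlt⟩ := f.exists_lt_apply_of_lt_opNorm hr1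
  have hx0 : x ≠ 0 := by
    intro h
    rw [h] at hxlt
    simp at hxlt
    linarith
  set z : X := ((‖x‖ : 𝕜))⁻¹ • x with hzdef
  have hz1 : ‖z‖ = 1 := by
    rw [hzdef, norm_smul, norm_inv, RCLike.norm_ofReal, abs_norm,
      inv_mul_cancel₀ (norm_ne_zero_iff.mpr hx0)]
  have hxpos : (0 : ℝ) < ‖x‖ := norm_pos_iff.mpr hx0
  have hfz : 1 - η < ‖f z‖ := by
    have h1 : ‖f z‖ = ‖x‖⁻¹ * ‖f x‖ := by
      rw [hzdef, map_smul, norm_smul, norm_inv, RCLike.norm_ofReal, abs_norm]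
    have h2 : ‖f x‖ ≤ ‖f z‖ := by
      rw [h1, le_inv_mul_iff₀ hxpos]
      nlinarith [norm_nonneg (f x), hx1.le]
    have : 1 - η ≤ r := le_max_left _ _
    linarith
  obtain ⟨x₀, hx₀1, hTx₀, _⟩ := hconc z hz1 (by rwa [hTapp])
  exact hfna x₀ hx₀1 (by rwa [hTapp] at hTx₀)
end
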